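/- arXiv:math/0301111 — 3 statements merged into one kernel-verified Lean document; each statement's English description precedes it below -/
import Mathlib

section
/- Let K be a number field, let x ≥ 7 and y ≥ 0 be real numbers. If ψ_K(x+y) − ψ_K(x) ≥ (1 + (7·n_K/2)·√(x+y))·log(x+y), then π_K(x+y) − π_K(x) ≥ 1 + (n_K/2)·√(x+y). -/
open NumberField

/-- A nonzero prime ideal of `𝓞 K` is unramified if its ramification index over the
rational prime below it equals 1. -/
def IsUnramifiedPrimeIdeal (K : Type) [Field K] [NumberField K] (q : Ideal (𝓞 K)) : Prop :=
  q.IsPrime ∧ q ≠ ⊥ ∧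
    Ideal.ramificationIdx' (Ideal.comap (algebraMap ℤ (𝓞 K)) q) q = 1

/-- `ψ_K(x) = Σ log N𝔮`, the sum over pairs `(𝔮, m)` with `𝔮` an unramified nonzero prime
ideal of `𝓞 K`, `m ≥ 1`, and `(N𝔮)^m ≤ x`. -/
noncomputable def psiK (K : Type) [Field K] [NumberField K] (x : ℝ) : ℝ :=
  ∑ᶠ (q : Ideal (𝓞 K)) (m : ℕ)
    (_ : IsUnramifiedPrimeIdeal K q ∧ 1 ≤ m ∧ (Ideal.absNorm q : ℝ) ^ m ≤ x),
    Real.log (Ideal.absNorm q)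

/-- `π_K(x)`: the number of nonzero prime ideals of `𝓞 K` of absolute norm at most `x`. -/
noncomputable def piK (K : Type) [Field K] [NumberField K] (x : ℝ) : ℕ :=
  {p : Ideal (𝓞 K) | p.IsPrime ∧ p ≠ ⊥ ∧ (Ideal.absNorm p : ℝ) ≤ x}.ncard

/-! A prime `𝔮` with `N𝔮 > √s`, where `s = x + y`, has no power other than `𝔮` itself of norm
at most `s`, so it contributes to `ψ_K(s) − ψ_K(x)` only if `x < N𝔮 ≤ s`, and then at most
`log s`. Every other prime contributes at most `log s` in total, and there are at most
`n_K √s` of them: each contains a rational prime `p ≤ N𝔮`, and at most `n_K` primes contain a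
given `p` because `N(p) = p ^ n_K` while each of them has norm at least `p`. Hence
`ψ_K(s) − ψ_K(x) ≤ (n_K √s + π_K(s) − π_K(x)) log s`, which with the hypothesis gives
`π_K(s) − π_K(x) ≥ 1 + (5 n_K / 2) √s`. -/

open Ideal Module UniqueFactorizationMonoid

namespace Ideal

variable {S : Type*} [CommRing S] [IsDedekindDomain S] [Module.Free ℤ S] [Module.Finite ℤ S]

theorem one_lt_absNorm {I : Ideal S} (htop : I ≠ ⊤) (hbot : I ≠ ⊥) : 1 < absNorm I :=
  Nat.one_lt_iff_ne_zero_and_ne_one.mpr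
    ⟨absNorm_eq_zero_iff.not.mpr hbot, absNorm_eq_one_iff.not.mpr htop⟩

theorem span_natCast_ne_bot {n : ℕ} (hn : n ≠ 0) : span {(n : S)} ≠ ⊥ := by
  intro h
  have := absNorm_span_natCast (S := S) n
  rw [h, absNorm_bot] at this
  exact pow_ne_zero _ hn this.symm

theorem le_absNorm_of_natCast_mem {p : ℕ} (hp : p.Prime) {P : Ideal S} (hP : P ≠ ⊤)
    (hpP : (p : S) ∈ P) : p ≤ absNorm P := by
  have hdvd : absNorm P ∣ p ^ finrank ℤ S :=
    absNorm_span_natCast (S := S) p ▸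
      absNorm_dvd_absNorm_of_le ((span_singleton_le_iff_mem P).mpr hpP)
  obtain ⟨j, -, hj⟩ := (Nat.dvd_prime_pow hp).mp hdvd
  have hj0 : j ≠ 0 := by
    rintro rfl
    exact hP (absNorm_eq_one_iff.mp (by simpa using hj))
  rw [hj]
  exact Nat.le_self_pow hj0 p

theorem card_normalizedFactors_span_natCast_le {p : ℕ} (hp : p.Prime) :
    Multiset.card (normalizedFactors (span {(p : S)})) ≤ finrank ℤ S := by
  have hbot := span_natCast_ne_bot (S := S) hp.ne_zero
  have hpow : p ^ Multiset.card (normalizedFactors (span {(p : S)})) ≤ p ^ finrank ℤ S := by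
    calc p ^ Multiset.card (normalizedFactors (span {(p : S)}))
        = p ^ Multiset.card ((normalizedFactors (span {(p : S)})).map absNorm) := by
          rw [Multiset.card_map]
      _ ≤ ((normalizedFactors (span {(p : S)})).map absNorm).prod := by
          refine Multiset.pow_card_le_prod fun n hn => ?_
          obtain ⟨P, hP, rfl⟩ := Multiset.mem_map.mp hn
          obtain ⟨hPprime, hle⟩ := (mem_normalizedFactors_iff hbot).mp hP
          exact le_absNorm_of_natCast_mem hp hPprime.ne_top (hle (mem_span_singleton_self _))
      _ = p ^ finrank ℤ S := by
          rw [← map_multiset_prod, prod_normalizedFactors_eq hbot, normalize_eq,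
            absNorm_span_natCast]
  exact (Nat.pow_le_pow_iff_right hp.one_lt).mp hpow

theorem setOf_isPrime_natCast_mem_subset {p : ℕ} (hp : p ≠ 0) :
    {P : Ideal S | P.IsPrime ∧ (p : S) ∈ P} ⊆ (normalizedFactors (span {(p : S)})).toFinset := by
  classical
  rintro P ⟨hP, hpP⟩
  rw [Finset.mem_coe, Multiset.mem_toFinset, mem_normalizedFactors_iff (span_natCast_ne_bot hp)]
  exact ⟨hP, (span_singleton_le_iff_mem P).mpr hpP⟩

theorem ncard_setOf_isPrime_natCast_mem_le {p : ℕ} (hp : p.Prime) :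
    {P : Ideal S | P.IsPrime ∧ (p : S) ∈ P}.ncard ≤ finrank ℤ S := by
  classical
  calc {P : Ideal S | P.IsPrime ∧ (p : S) ∈ P}.ncard
      ≤ ((normalizedFactors (span {(p : S)})).toFinset : Set (Ideal S)).ncard :=
        Set.ncard_le_ncard (setOf_isPrime_natCast_mem_subset hp.ne_zero) (Finset.finite_toSet _)
    _ ≤ finrank ℤ S := by
        rw [Set.ncard_coe_finset]
        exact (Multiset.toFinset_card_le _).trans (card_normalizedFactors_span_natCast_le hp)

theorem ncard_setOf_isPrime_absNorm_le (n : ℕ) :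
    {P : Ideal S | P.IsPrime ∧ P ≠ ⊥ ∧ absNorm P ≤ n}.ncard ≤ finrank ℤ S * n := by
  classical
  set primes := (Finset.Icc 1 n).filter Nat.Prime
  have hsub : {P : Ideal S | P.IsPrime ∧ P ≠ ⊥ ∧ absNorm P ≤ n} ⊆
      ⋃ p ∈ primes, {P : Ideal S | P.IsPrime ∧ (p : S) ∈ P} := by
    rintro P ⟨hP, hbot, hle⟩
    have := hP.isMaximal hbot
    obtain ⟨p, -, -, hpP, hp, -⟩ := exists_prime_and_absNorm_eq_pow P
    have hpn := (le_absNorm_of_natCast_mem hp hP.ne_top hpP).trans hle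
    exact Set.mem_biUnion (Finset.mem_filter.mpr ⟨Finset.mem_Icc.mpr ⟨hp.one_le, hpn⟩, hp⟩)
      ⟨hP, hpP⟩
  have hfin : (⋃ p ∈ primes, {P : Ideal S | P.IsPrime ∧ (p : S) ∈ P}).Finite :=
    primes.finite_toSet.biUnion fun p hp =>
      (Finset.finite_toSet _).subset
        (setOf_isPrime_natCast_mem_subset (Finset.mem_filter.mp hp).2.ne_zero)
  calc {P : Ideal S | P.IsPrime ∧ P ≠ ⊥ ∧ absNorm P ≤ n}.ncard
      ≤ (⋃ p ∈ primes, {P : Ideal S | P.IsPrime ∧ (p : S) ∈ P}).ncard :=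
        Set.ncard_le_ncard hsub hfin
    _ ≤ ∑ p ∈ primes, {P : Ideal S | P.IsPrime ∧ (p : S) ∈ P}.ncard :=
        primes.set_ncard_biUnion_le _
    _ ≤ ∑ _p ∈ primes, finrank ℤ S :=
        Finset.sum_le_sum fun p hp =>
          ncard_setOf_isPrime_natCast_mem_le (Finset.mem_filter.mp hp).2
    _ ≤ finrank ℤ S * n := by
        rw [Finset.sum_const, smul_eq_mul, mul_comm]
        refine Nat.mul_le_mul_left _ ((Finset.card_filter_le _ _).trans ?_)
        simp

end Ideal

open Real

noncomputable def psiTerm (a t : ℝ) : ℝ := ∑ᶠ (m : ℕ) (_ : 1 ≤ m ∧ a ^ m ≤ t), log a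

section psiTerm

variable {a t : ℝ}

theorem psiTerm_nonneg (ha : 1 ≤ a) : 0 ≤ psiTerm a t :=
  finsum_nonneg fun _ => finsum_nonneg fun _ => log_nonneg ha

theorem le_of_psiTerm_ne_zero (ha : 1 ≤ a) (h : psiTerm a t ≠ 0) : a ≤ t := by
  obtain ⟨m, ⟨hm, hmt⟩, -⟩ := exists_ne_zero_of_finsum_mem_ne_zero h
  exact (le_self_pow₀ ha (by omega)).trans hmt

theorem psiTerm_le_log (ha : 1 < a) (ht : 1 ≤ t) : psiTerm a t ≤ log t := by
  have hloga := log_pos ha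
  set M := ⌊log t / log a⌋₊
  have hsub : {m : ℕ | 1 ≤ m ∧ a ^ m ≤ t} ⊆ Set.Icc 1 M := by
    rintro m ⟨hm, hmt⟩
    refine ⟨hm, Nat.le_floor ?_⟩
    rw [le_div_iff₀ hloga, ← log_pow]
    exact log_le_log (by positivity) hmt
  have hfin := (Set.finite_Icc 1 M).subset hsub
  calc psiTerm a t = hfin.toFinset.card * log a := by
        rw [← nsmul_eq_mul, ← Finset.sum_const]
        exact finsum_mem_eq_finite_toFinset_sum _ hfin
    _ ≤ (Finset.Icc 1 M).card * log a := by
        gcongr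
        exact Set.Finite.toFinset_subset.mpr (by simpa using hsub)
    _ = M * log a := by simp
    _ ≤ log t / log a * log a := by
        gcongr
        exact Nat.floor_le (div_nonneg (log_nonneg ht) hloga.le)
    _ = log t := div_mul_cancel₀ _ hloga.ne'

theorem psiTerm_of_lt_sq (ha : 1 ≤ a) (h : t < a ^ 2) :
    psiTerm a t = if a ≤ t then log a else 0 := by
  have hexp : ∀ m : ℕ, 1 ≤ m ∧ a ^ m ≤ t ↔ m = 1 ∧ a ≤ t := by
    refine fun m => ⟨fun ⟨hm, hmt⟩ => ?_, by rintro ⟨rfl, hat⟩; simpa⟩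
    obtain rfl | hm2 := hm.eq_or_lt
    · simpa using hmt
    · exact absurd hmt (not_le.mpr (h.trans_le (pow_le_pow_right₀ ha hm2)))
  simp_rw [psiTerm, hexp]
  split_ifs with hat <;> simp [hat]

theorem psiTerm_sub_le {x s : ℝ} (ha : 1 < a) (hs : 1 ≤ s) (hxs : x ≤ s) :
    psiTerm a s - psiTerm a x ≤
      (if a ≤ √s then log s else 0) + (if x < a then log s else 0) := by
  have hlog := log_nonneg hs
  by_cases hsq : a ≤ √s
  · have := psiTerm_le_log ha hs
    have := psiTerm_nonneg (t := x) ha.le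
    split_ifs <;> linarith
  · have hs2 : s < a ^ 2 := (sqrt_lt' (by linarith)).mp (not_le.mp hsq)
    rw [psiTerm_of_lt_sq ha.le hs2, psiTerm_of_lt_sq ha.le (hxs.trans_lt hs2), if_neg hsq]
    by_cases has : a ≤ s
    · have := log_le_log (by linarith) has
      split_ifs <;> linarith
    · rw [if_neg has, if_neg (by linarith)]
      split_ifs <;> linarith

end psiTerm

section NumberField

variable (K : Type) [Field K] [NumberField K]

def primesLE (t : ℝ) : Set (Ideal (𝓞 K)) :=
  {p : Ideal (𝓞 K) | p.IsPrime ∧ p ≠ ⊥ ∧ (absNorm p : ℝ) ≤ t}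

theorem finite_primesLE (t : ℝ) : (primesLE K t).Finite :=
  (finite_setOfPred_absNorm_le ⌊t⌋₊).subset fun _ hp => Nat.le_floor hp.2.2

theorem piK_eq_card (t : ℝ) : piK K t = (finite_primesLE K t).toFinset.card :=
  Set.ncard_eq_toFinset_card _ _

variable {K} in
theorem mem_primesLE_toFinset {t : ℝ} {q : Ideal (𝓞 K)} :
    q ∈ (finite_primesLE K t).toFinset ↔ q.IsPrime ∧ q ≠ ⊥ ∧ (absNorm q : ℝ) ≤ t := by
  simp [primesLE]

theorem filter_primesLE_toFinset {t T : ℝ} (htT : t ≤ T) :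
    (finite_primesLE K T).toFinset.filter (fun q => (absNorm q : ℝ) ≤ t) =
      (finite_primesLE K t).toFinset := by
  ext q
  simp only [Finset.mem_filter, mem_primesLE_toFinset]
  exact ⟨fun ⟨⟨hP, hbot, _⟩, hle⟩ => ⟨hP, hbot, hle⟩,
    fun ⟨hP, hbot, hle⟩ => ⟨⟨hP, hbot, hle.trans htT⟩, hle⟩⟩

theorem piK_le_finrank_mul {t : ℝ} (ht : 0 ≤ t) : (piK K t : ℝ) ≤ finrank ℚ K * t := by
  have hpi : piK K t = {P : Ideal (𝓞 K) | P.IsPrime ∧ P ≠ ⊥ ∧ absNorm P ≤ ⌊t⌋₊}.ncard := by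
    simp only [piK, Nat.le_floor_iff ht]
  have hcount := ncard_setOf_isPrime_absNorm_le (S := 𝓞 K) ⌊t⌋₊
  rw [← hpi, RingOfIntegers.rank] at hcount
  calc (piK K t : ℝ) ≤ (finrank ℚ K * ⌊t⌋₊ : ℕ) := by exact_mod_cast hcount
    _ ≤ finrank ℚ K * t := by
        push_cast
        gcongr
        exact Nat.floor_le ht

theorem psiK_eq_finsum (t : ℝ) :
    psiK K t =
      ∑ᶠ q, {q | IsUnramifiedPrimeIdeal K q}.indicator (fun q => psiTerm (absNorm q) t) q := by
  refine finsum_congr fun q => ?_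
  by_cases hq : IsUnramifiedPrimeIdeal K q <;> simp [hq, psiTerm]

theorem psiK_eq_sum {t T : ℝ} (htT : t ≤ T) :
    psiK K t = ∑ q ∈ (finite_primesLE K T).toFinset,
      {q | IsUnramifiedPrimeIdeal K q}.indicator (fun q => psiTerm (absNorm q) t) q := by
  rw [psiK_eq_finsum]
  refine finsum_eq_sum_of_support_subset _ fun q hq => ?_
  have hU : q ∈ {q | IsUnramifiedPrimeIdeal K q} := Set.mem_of_indicator_ne_zero hq
  rw [Function.mem_support, Set.indicator_of_mem hU] at hq
  have hN : (1 : ℝ) ≤ absNorm q := by exact_mod_cast (one_lt_absNorm hU.1.ne_top hU.2.1).le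
  exact Finset.mem_coe.mpr <|
    mem_primesLE_toFinset.mpr ⟨hU.1, hU.2.1, (le_of_psiTerm_ne_zero hN hq).trans htT⟩

theorem card_filter_lt_absNorm {x s : ℝ} (hxs : x ≤ s) :
    ((finite_primesLE K s).toFinset.filter (fun q => x < absNorm q)).card =
      (piK K s : ℝ) - piK K x := by
  have := (finite_primesLE K s).toFinset.card_filter_add_card_filter_not
    (fun q => (absNorm q : ℝ) ≤ x)
  simp only [not_le] at this
  rw [filter_primesLE_toFinset K hxs, ← piK_eq_card, ← piK_eq_card] at this
  rw [eq_sub_iff_add_eq']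
  exact_mod_cast this

theorem psiK_sub_le {x s : ℝ} (hs : 1 ≤ s) (hxs : x ≤ s) :
    psiK K s - psiK K x ≤ (piK K √s + ((piK K s : ℝ) - piK K x)) * log s := by
  set F := (finite_primesLE K s).toFinset
  have hterm : ∀ q ∈ F,
      {q | IsUnramifiedPrimeIdeal K q}.indicator (fun q => psiTerm (absNorm q) s) q -
        {q | IsUnramifiedPrimeIdeal K q}.indicator (fun q => psiTerm (absNorm q) x) q ≤
      (if (absNorm q : ℝ) ≤ √s then log s else 0) + (if x < absNorm q then log s else 0) := by
    intro q _
    by_cases hU : IsUnramifiedPrimeIdeal K q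
    · simp only [Set.indicator_of_mem (s := {q | IsUnramifiedPrimeIdeal K q}) hU]
      have hN : (1 : ℝ) < absNorm q := by exact_mod_cast one_lt_absNorm hU.1.ne_top hU.2.1
      exact psiTerm_sub_le hN hs hxs
    · simp only [Set.indicator_of_notMem (s := {q | IsUnramifiedPrimeIdeal K q}) hU, sub_zero]
      have := log_nonneg hs
      split_ifs <;> linarith
  rw [psiK_eq_sum K le_rfl, psiK_eq_sum K hxs, ← Finset.sum_sub_distrib]
  calc _ ≤ ∑ q ∈ F, ((if (absNorm q : ℝ) ≤ √s then log s else 0) +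
        (if x < absNorm q then log s else 0)) := Finset.sum_le_sum hterm
    _ = _ := by
        rw [Finset.sum_add_distrib, ← Finset.sum_filter, ← Finset.sum_filter, Finset.sum_const,
          Finset.sum_const, nsmul_eq_mul, nsmul_eq_mul,
          filter_primesLE_toFinset K (sqrt_le_self_iff.mpr (.inr hs)), ← piK_eq_card,
          card_filter_lt_absNorm K hxs, add_mul]

end NumberField

/-- for a number field `K` and reals `x ≥ 7`, `y ≥ 0`, if
`ψ_K(x+y) − ψ_K(x) ≥ (1 + (7n_K/2)√(x+y))·log(x+y)` then
`π_K(x+y) − π_K(x) ≥ 1 + (n_K/2)√(x+y)`. -/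
theorem piK_interval_of_psiK_interval (K : Type) [Field K] [NumberField K]
    (x y : ℝ) (hx : 7 ≤ x) (hy : 0 ≤ y)
    (h : psiK K (x + y) - psiK K x ≥
      (1 + 7 * (Module.finrank ℚ K : ℝ) / 2 * Real.sqrt (x + y)) * Real.log (x + y)) :
    (piK K (x + y) : ℝ) - piK K x ≥
      1 + (Module.finrank ℚ K : ℝ) / 2 * Real.sqrt (x + y) := by
  set s := x + y
  have hs : 1 ≤ s := by linarith
  have hlog : 0 < log s := log_pos (by linarith)
  have hsmall := piK_le_finrank_mul K (sqrt_nonneg s)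
  have hcount : 1 + 7 * (finrank ℚ K : ℝ) / 2 * √s ≤ piK K √s + ((piK K s : ℝ) - piK K x) :=
    le_of_mul_le_mul_right (h.le.trans (psiK_sub_le K hs (by linarith))) hlog
  have : 0 ≤ (finrank ℚ K : ℝ) * √s := by positivity
  linarith
end

section
/- Let K be a number field. For every real x ≥ 0, one has 0 ≤ π⁰_K(x) − π¹_K(x) ≤ (n_K/2)·√x, where π⁰_K(x) is the number of unramified nonzero prime ideals 𝔭 of O_K with N𝔭 ≤ x, and π¹_K(x) is the number of unramified nonzero prime ideals 𝔭 of O_K with N𝔭 ≤ x whose residue (inertia) degree over the rational prime below 𝔭 equals 1. -/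
open NumberField

/-- `π⁰_K(x)`: the number of unramified nonzero prime ideals of `𝓞 K` of norm at most `x`. -/
noncomputable def piZeroK (K : Type) [Field K] [NumberField K] (x : ℝ) : ℕ :=
  {q : Ideal (𝓞 K) | IsUnramifiedPrimeIdeal K q ∧ (Ideal.absNorm q : ℝ) ≤ x}.ncard

/-- `π¹_K(x)`: the number of unramified nonzero prime ideals of `𝓞 K` of norm at most `x`
whose residue (inertia) degree over the rational prime below equals 1. -/
noncomputable def piOneK (K : Type) [Field K] [NumberField K] (x : ℝ) : ℕ :=
  {q : Ideal (𝓞 K) | IsUnramifiedPrimeIdeal K q ∧ (Ideal.absNorm q : ℝ) ≤ x ∧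
    Ideal.inertiaDeg' (Ideal.comap (algebraMap ℤ (𝓞 K)) q) q = 1}.ncard

/-! A prime `q` counted by `π⁰_K(x) - π¹_K(x)` has inertia degree `f ≥ 2` over the rational prime
`p` below it, so `p ^ 2 ≤ p ^ f = N q ≤ x`, i.e. `p ≤ √x`. Above a fixed `p` the fundamental
identity `∑ e_q f_q = n_K` leaves room for at most `n_K / 2` primes with `e_q f_q ≥ 2`. -/

open Finset

theorem Int.card_le_sqrt_of_absNorm_sq_le {s : Finset (Ideal ℤ)} {x : ℝ}
    (hs : ∀ P ∈ s, P ≠ ⊥ ∧ (Ideal.absNorm P : ℝ) ^ 2 ≤ x) : (#s : ℝ) ≤ √x := by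
  have hmaps : ∀ P ∈ s, Ideal.absNorm P ∈ Icc 1 ⌊√x⌋₊ := fun P hP ↦ by
    obtain ⟨hP0, hPx⟩ := hs P hP
    refine mem_Icc.mpr ⟨Nat.one_le_iff_ne_zero.mpr ?_, Nat.le_floor ?_⟩
    · rwa [Ne, Ideal.absNorm_eq_zero_iff]
    · exact (le_abs_self _).trans (Real.abs_le_sqrt hPx)
  have hinj : Set.InjOn Ideal.absNorm s := fun P _ Q _ h ↦ by
    rw [← Int.ideal_span_absNorm_eq_self P, ← Int.ideal_span_absNorm_eq_self Q, h]
  calc (#s : ℝ) ≤ #(Icc 1 ⌊√x⌋₊) := by exact_mod_cast card_le_card_of_injOn _ hmaps hinj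
    _ = ⌊√x⌋₊ := by simp
    _ ≤ √x := Nat.floor_le (Real.sqrt_nonneg x)

namespace Ideal

theorem mul_card_le_finrank_of_le_ramificationIdx_mul_inertiaDeg {R S : Type*} [CommRing R]
    [IsDomain R] [CommRing S] [Algebra R S] [Module.Finite R S] [Module.Flat R S]
    (p : Ideal R) [p.IsPrime] [Fintype (p.primesOver S)] {F : Finset (Ideal S)} {c : ℕ}
    (hF : ∀ q ∈ F, q ∈ p.primesOver S ∧ c ≤ q.ramificationIdx R * q.inertiaDeg R) :
    c * #F ≤ Module.finrank R S := by
  classical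
  calc c * #F ≤ ∑ q ∈ F, q.ramificationIdx R * q.inertiaDeg R := by
        rw [mul_comm, ← smul_eq_mul, ← sum_const]
        exact sum_le_sum fun q hq ↦ (hF q hq).2
    _ = ∑ q ∈ F.subtype (· ∈ p.primesOver S), q.1.ramificationIdx R * q.1.inertiaDeg R :=
        (sum_subtype_of_mem _ fun q hq ↦ (hF q hq).1).symm
    _ ≤ ∑ q : p.primesOver S, q.1.ramificationIdx R * q.1.inertiaDeg R :=
        sum_le_sum_of_subset (subset_univ _)
    _ = Module.finrank R S := sum_ramification_inertia_eq_finrank p S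

theorem two_le_inertiaDeg_of_inertiaDeg'_ne_one {S : Type*} [CommRing S] [IsDomain S]
    [Module.Finite ℤ S] {q : Ideal S} [q.IsPrime] (hq : q ≠ ⊥)
    (hf : (q.under ℤ).inertiaDeg' q ≠ 1) : 2 ≤ q.inertiaDeg ℤ := by
  have : (q.under ℤ).IsMaximal := IsPrime.isMaximal inferInstance (under_ne_bot ℤ hq)
  have : q.IsMaximal := IsMaximal.of_liesOver_isMaximal q (q.under ℤ)
  have := inertiaDeg_pos q ℤ
  rw [inertiaDeg'_eq_inertiaDeg] at hf
  omega

variable {S : Type*} [CommRing S] [IsDedekindDomain S] [Module.Free ℤ S] [Module.Finite ℤ S]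

theorem absNorm_under_sq_le {q : Ideal S} [q.IsPrime] (hq : q ≠ ⊥)
    (hf : 2 ≤ q.inertiaDeg ℤ) : absNorm (q.under ℤ) ^ 2 ≤ absNorm q := by
  rw [← absNorm_pow_inertiaDeg (q.under ℤ) q]
  refine Nat.pow_le_pow_right (Nat.pos_of_ne_zero ?_) hf
  rw [Ne, absNorm_eq_zero_iff]
  exact under_ne_bot ℤ hq

theorem card_le_finrank_div_two_mul_sqrt {T : Finset (Ideal S)} {x : ℝ}
    (hT : ∀ q ∈ T, q.IsPrime ∧ q ≠ ⊥ ∧ 2 ≤ q.inertiaDeg ℤ ∧ (absNorm q : ℝ) ≤ x) :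
    (#T : ℝ) ≤ Module.finrank ℤ S / 2 * √x := by
  classical
  set U := T.image (under ℤ)
  have hU : ∀ P ∈ U, P ≠ ⊥ ∧ (absNorm P : ℝ) ^ 2 ≤ x := by
    simp only [U, mem_image]
    rintro _ ⟨q, hqT, rfl⟩
    obtain ⟨hqp, hq0, hf, hqx⟩ := hT q hqT
    exact ⟨under_ne_bot ℤ hq0, le_trans (by exact_mod_cast absNorm_under_sq_le hq0 hf) hqx⟩
  have hfiber : ∀ P ∈ U, #{q ∈ T | q.under ℤ = P} ≤ Module.finrank ℤ S / 2 := by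
    intro P hP
    obtain ⟨q₀, hq₀T, rfl⟩ := mem_image.mp hP
    have := (hT q₀ hq₀T).1
    have : (q₀.under ℤ).IsMaximal := IsPrime.isMaximal inferInstance (hU _ hP).1
    rw [Nat.le_div_iff_mul_le two_pos, mul_comm]
    refine mul_card_le_finrank_of_le_ramificationIdx_mul_inertiaDeg (q₀.under ℤ) fun q hq ↦ ?_
    obtain ⟨hqT, hqP⟩ := mem_filter.mp hq
    obtain ⟨hqp, -, hf, -⟩ := hT q hqT
    exact ⟨⟨hqp, ⟨hqP.symm⟩⟩, le_mul_of_one_le_of_le (ramificationIdx_pos q ℤ) hf⟩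
  calc (#T : ℝ) ≤ ((Module.finrank ℤ S / 2 : ℕ) : ℝ) * #U := by
        exact_mod_cast card_le_mul_card_image T _ hfiber
    _ ≤ Module.finrank ℤ S / 2 * √x := by
        gcongr
        · exact Nat.cast_div_le
        · exact Int.card_le_sqrt_of_absNorm_sq_le hU

end Ideal

theorem piZeroK_sub_piOneK_bound_general (K : Type) [Field K] [NumberField K]
    (x : ℝ) :
    piOneK K x ≤ piZeroK K x ∧
      (piZeroK K x : ℝ) - piOneK K x ≤ (Module.finrank ℚ K : ℝ) / 2 * Real.sqrt x := by
  set A := {q : Ideal (𝓞 K) | IsUnramifiedPrimeIdeal K q ∧ (Ideal.absNorm q : ℝ) ≤ x}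
  set B := {q : Ideal (𝓞 K) | IsUnramifiedPrimeIdeal K q ∧ (Ideal.absNorm q : ℝ) ≤ x ∧
    Ideal.inertiaDeg' (Ideal.comap (algebraMap ℤ (𝓞 K)) q) q = 1}
  have hA : A.Finite :=
    (Ideal.finite_setOfPred_absNorm_le ⌊x⌋₊).subset fun q hq ↦ Nat.le_floor hq.2
  have hBA : B ⊆ A := fun q hq ↦ ⟨hq.1, hq.2.1⟩
  refine ⟨Set.ncard_le_ncard hBA hA, ?_⟩
  rw [piZeroK, piOneK, ← Set.cast_ncard_sdiff hBA hA, Set.ncard_eq_toFinset_card _ hA.sdiff,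
    ← RingOfIntegers.rank]
  refine Ideal.card_le_finrank_div_two_mul_sqrt fun q hq ↦ ?_
  obtain ⟨⟨⟨hqp, hq0, he⟩, hqx⟩, hqB⟩ := (Set.Finite.mem_toFinset _).mp hq
  exact ⟨hqp, hq0,
    Ideal.two_le_inertiaDeg_of_inertiaDeg'_ne_one hq0 fun hf ↦ hqB ⟨⟨hqp, hq0, he⟩, hqx, hf⟩, hqx⟩

/-- for a number field `K` and every real `x ≥ 0`,
`0 ≤ π⁰_K(x) − π¹_K(x) ≤ (n_K/2)·√x`. -/
theorem piZeroK_sub_piOneK_bound (K : Type) [Field K] [NumberField K]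
    (x : ℝ) (hx : 0 ≤ x) :
    piOneK K x ≤ piZeroK K x ∧
      (piZeroK K x : ℝ) - piOneK K x ≤ (Module.finrank ℚ K : ℝ) / 2 * Real.sqrt x :=
  piZeroK_sub_piOneK_bound_general K x
end

section
/- For an integer n ≥ 2, let π_n denote the product of the first n prime numbers and consider the pair of univariate polynomials F = (x^{π_n} − 1, x − π_n) over ℤ. Then F has no common zero in ℂ, yet the number of primes p such that the reductions of the two polynomials modulo p have a common zero in ℤ/pℤ is at least 2^n. -/
/-!
Modulo a prime `p`, the two polynomials have a common zero exactly when `π_n ^ π_n ≡ 1`, i.e. when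
the order of `π_n` modulo `p` divides `π_n`. For each of the `2 ^ n` divisors `d` of `π_n`, any prime
factor `p` of `Φ_d(π_n)` (which is `> 1` in absolute value) does not divide `π_n`, hence not `d`,
and so `π_n` has order exactly `d` modulo `p`. Distinct orders give distinct primes.
-/

open Polynomial Finset

/-- `π_n`: the product of the first `n` prime numbers. -/
noncomputable def primesProd (n : ℕ) : ℕ := ∏ i ∈ Finset.range n, Nat.nth Nat.Prime i

theorem exists_common_root_X_pow_sub_one_X_sub_C_iff {R : Type*} [CommRing R] (m : ℕ) (c : ℤ) :
    (∃ y : R, aeval y ((X : ℤ[X]) ^ m - 1) = 0 ∧ aeval y (X - C c) = 0) ↔ (c : R) ^ m = 1 := by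
  simp [sub_eq_zero]

theorem one_lt_natAbs_cyclotomic_eval {b d : ℕ} (hb : 3 ≤ b) (hd : d ≠ 0) :
    1 < (eval (b : ℤ) (cyclotomic d ℤ)).natAbs := by
  obtain rfl | hd1 := (Nat.one_le_iff_ne_zero.2 hd).eq_or_lt
  · simp only [cyclotomic_one, eval_sub, eval_X, eval_one]
    omega
  · calc 1 < b - 1 := by omega
      _ < _ := sub_one_lt_natAbs_cyclotomic_eval hd1 (by omega)

theorem exists_prime_orderOf_natCast_eq {b d : ℕ} (hb : 3 ≤ b) (hd : d ∣ b) :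
    ∃ p, p.Prime ∧ orderOf (b : ZMod p) = d := by
  have hd0 : d ≠ 0 := by rintro rfl; omega
  set p := (eval (b : ℤ) (cyclotomic d ℤ)).natAbs.minFac
  have hp : Fact p.Prime := ⟨Nat.minFac_prime (one_lt_natAbs_cyclotomic_eval hb hd0).ne'⟩
  have hroot : IsRoot (cyclotomic d (ZMod p)) (Nat.castRingHom (ZMod p) b) := by
    rw [eq_natCast, ← Int.cast_natCast, IsRoot.def, ← map_cyclotomic_int, eval_intCast_map,
      Int.cast_id, eq_intCast, ZMod.intCast_zmod_eq_zero_iff_dvd]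
    exact Int.dvd_natAbs.1 (mod_cast Nat.minFac_dvd _)
  have hpb : ¬p ∣ b :=
    hp.1.coprime_iff_not_dvd.1 (Polynomial.coprime_of_root_cyclotomic (by omega) hroot).symm
  have : NeZero (d : ZMod p) := NeZero.of_not_dvd (ZMod p) fun hpd => hpb (hpd.trans hd)
  exact ⟨p, hp.1, ((isRoot_cyclotomic_iff.mp hroot).eq_orderOf).symm⟩

theorem finite_setOf_prime_natCast_pow_eq_one {a m : ℕ} (h : 1 < a ^ m) :
    {p : ℕ | p.Prime ∧ (a : ZMod p) ^ m = 1}.Finite := by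
  refine (a ^ m - 1).primeFactors.finite_toSet.subset fun p ⟨hp, hpow⟩ => ?_
  have hmod : 1 ≡ a ^ m [MOD p] := by
    rw [← ZMod.natCast_eq_natCast_iff, Nat.cast_pow, hpow, Nat.cast_one]
  exact Nat.mem_primeFactors.2 ⟨hp, (Nat.modEq_iff_dvd' h.le).1 hmod, by omega⟩

theorem card_divisors_le_ncard_setOf_prime_natCast_pow_self_eq_one {b : ℕ} (hb : 3 ≤ b) :
    #b.divisors ≤ {p : ℕ | p.Prime ∧ (b : ZMod p) ^ b = 1}.ncard := by
  choose! q hq_prime hq_order using fun d (hd : d ∈ b.divisors) =>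
    exists_prime_orderOf_natCast_eq hb (Nat.dvd_of_mem_divisors hd)
  rw [← Set.ncard_coe_finset]
  refine Set.ncard_le_ncard_of_injOn q (fun d hd => ⟨hq_prime d hd, ?_⟩) (fun d₁ hd₁ d₂ hd₂ h => ?_)
    (finite_setOf_prime_natCast_pow_eq_one (Nat.one_lt_pow (by omega) (by omega)))
  · rw [← orderOf_dvd_iff_pow_eq_one, hq_order d hd]
    exact Nat.dvd_of_mem_divisors hd
  · have h₁ := hq_order d₁ hd₁
    rw [h] at h₁
    rw [← h₁, hq_order d₂ hd₂]

theorem Nat.two_pow_card_primeFactors_le_card_divisors {m : ℕ} (hm : m ≠ 0) :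
    2 ^ #m.primeFactors ≤ #m.divisors := by
  rw [Nat.card_divisors hm]
  refine Finset.pow_card_le_prod _ _ _ fun p hp => ?_
  have := (Nat.prime_of_mem_primeFactors hp).factorization_pos_of_dvd hm
    (Nat.dvd_of_mem_primeFactors hp)
  omega

theorem primesProd_eq_prod_image (n : ℕ) :
    primesProd n = ∏ p ∈ (range n).image (Nat.nth Nat.Prime), p := by
  rw [primesProd, prod_image fun _ _ _ _ h => Nat.nth_injective Nat.infinite_setOfPred_prime h]

theorem card_primeFactors_primesProd (n : ℕ) : #(primesProd n).primeFactors = n := by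
  rw [primesProd_eq_prod_image, Nat.primeFactors_prod (by simp [Nat.prime_nth_prime]),
    card_image_of_injective _ (Nat.nth_injective Nat.infinite_setOfPred_prime), card_range]

theorem three_le_primesProd {n : ℕ} (hn : 2 ≤ n) : 3 ≤ primesProd n := by
  have hdvd : 3 ∣ primesProd n := by
    rw [← Nat.nth_prime_one_eq_three]
    exact dvd_prod_of_mem _ (mem_range.2 hn)
  exact Nat.le_of_dvd (Nat.pos_of_ne_zero (prod_ne_zero_iff.2 fun i _ =>
    (Nat.prime_nth_prime i).ne_zero)) hdvd

/-- for `n ≥ 2`, the system `F = (x^{π_n} − 1, x − π_n)` has no common zero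
in `ℂ`, yet the number of primes `p` such that its mod-`p` reductions have a common zero in
`ℤ/pℤ` is at least `2^n`. -/
theorem koiran_example (n : ℕ) (hn : 2 ≤ n) :
    (¬ ∃ z : ℂ,
        Polynomial.aeval z ((Polynomial.X : Polynomial ℤ) ^ primesProd n - 1) = 0 ∧
        Polynomial.aeval z
          ((Polynomial.X : Polynomial ℤ) - Polynomial.C (primesProd n : ℤ)) = 0) ∧
    2 ^ n ≤ {p : ℕ | p.Prime ∧ ∃ y : ZMod p,
        Polynomial.aeval y ((Polynomial.X : Polynomial ℤ) ^ primesProd n - 1) = 0 ∧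
        Polynomial.aeval y
          ((Polynomial.X : Polynomial ℤ) - Polynomial.C (primesProd n : ℤ)) = 0}.ncard := by
  have ha := three_le_primesProd hn
  simp only [exists_common_root_X_pow_sub_one_X_sub_C_iff, Int.cast_natCast]
  refine ⟨fun h => ?_, ?_⟩
  · have : primesProd n ^ primesProd n = 1 := by exact_mod_cast h
    rw [Nat.pow_eq_one] at this
    omega
  · calc 2 ^ n = 2 ^ #(primesProd n).primeFactors := by rw [card_primeFactors_primesProd]
      _ ≤ #(primesProd n).divisors := Nat.two_pow_card_primeFactors_le_card_divisors (by omega)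
      _ ≤ _ := card_divisors_le_ncard_setOf_prime_natCast_pow_self_eq_one ha
end
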